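/- (Theorem 5, quantified via the spectral gap.) For every p ≥ 1, r ≥ 1, ρ > 0 and ε > 0 there exists δ > 0 with the following property: for every injective α : Fin p → ℂ with |α i − α j| ≥ ρ whenever i ≠ j, and every B : ℕ → Matrix (Fin p) (Fin p) ℂ with B 0 = Matrix.diagonal α and ‖B k‖ < δ for all 1 ≤ k ≤ r, all formal exponents λ j = (B r − H r) j j of the splitting recursion satisfy |λ j| < ε. -/

import Mathlib

/-!
For `k ≤ r` the shift term of `H k` vanishes, so `H k` is a sum of fewer than `r` products of
two earlier terms `T l`, `A m`, `B m`. The spectral gap makes the solution `T k` of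
`T k * diagonal α - diagonal α * T k = offDiag (B k - H k)` of norm at most
`(p / ρ) * ‖B k - H k‖`, and `‖A k‖ ≤ ‖B k - H k‖`. Hence, by strong induction on `k`, if
`‖B k‖ ≤ δ` for `1 ≤ k ≤ r` then `‖H k‖ ≤ 6 r (p / ρ) δ² ≤ δ` once `δ` is small, so
`‖B k - H k‖ ≤ 2 δ`; the formal exponents are diagonal entries of `B r - H r`.
-/

attribute [local instance] Matrix.linftyOpNormedAddCommGroup

open Finset

namespace Matrix

variable {m n α : Type*} [Fintype m] [Fintype n]

theorem norm_entry_le_linfty_opNorm [NormedAddCommGroup α] (M : Matrix m n α) (i : m) (j : n) :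
    ‖M i j‖ ≤ ‖M‖ := by
  rw [linfty_opNorm_def]
  exact_mod_cast (single_le_sum (f := fun j' => ‖M i j'‖₊) (fun _ _ => zero_le)
    (mem_univ j)).trans (le_sup (f := fun i => ∑ j', ‖M i j'‖₊) (mem_univ i))

theorem linfty_opNorm_le_card_mul [NormedAddCommGroup α] {M : Matrix m n α} {c : ℝ}
    (hc : 0 ≤ c) (h : ∀ i j, ‖M i j‖ ≤ c) : ‖M‖ ≤ Fintype.card n * c := by
  lift c to NNReal using hc
  rw [linfty_opNorm_def]
  suffices ∀ i, ∑ j, ‖M i j‖₊ ≤ Fintype.card n * c by exact_mod_cast Finset.sup_le fun i _ => this i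
  intro i
  simpa using sum_le_sum fun j (_ : j ∈ univ) => (show ‖M i j‖₊ ≤ c from h i j)

theorem linfty_opNorm_diagonal_diag_le [NormedAddCommGroup α] [DecidableEq n]
    (M : Matrix n n α) : ‖diagonal fun j => M j j‖ ≤ ‖M‖ := by
  rw [linfty_opNorm_diagonal]
  exact (pi_norm_le_iff_of_nonneg (norm_nonneg _)).2 fun j => norm_entry_le_linfty_opNorm M j j

theorem linfty_opNorm_offDiag_div_le {𝕜 : Type*} [NormedField 𝕜] [DecidableEq n] {α : n → 𝕜}
    {ρ : ℝ} (hρ : 0 < ρ) (hgap : ∀ i j, i ≠ j → ρ ≤ ‖α i - α j‖) {M N : Matrix n n 𝕜}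
    (hM : ∀ i j, M i j = if i = j then 0 else N i j / (α j - α i)) :
    ‖M‖ ≤ Fintype.card n / ρ * ‖N‖ := by
  have hentry : ∀ i j, ‖M i j‖ ≤ ‖N‖ / ρ := by
    intro i j
    rw [hM]
    split_ifs with hij
    · rw [norm_zero]
      positivity
    · rw [norm_div]
      exact div_le_div₀ (norm_nonneg _) (norm_entry_le_linfty_opNorm N i j) hρ
        (hgap j i (Ne.symm hij))
  calc ‖M‖ ≤ Fintype.card n * (‖N‖ / ρ) := linfty_opNorm_le_card_mul (by positivity) hentry
    _ = Fintype.card n / ρ * ‖N‖ := by ring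

end Matrix

section SplittingRecursion

variable {R : Type*} [NormedRing R] {B T H A : ℕ → R} {r : ℕ} {K δ : ℝ}

theorem norm_sub_le_two_mul_of_splitting (hK : 0 ≤ K) (hδ : 6 * r * K * δ ≤ 1)
    (hH : ∀ k, 1 ≤ k → k ≤ r → H k = ∑ l ∈ Ico 1 k, (T l * A (k - l) - B (k - l) * T l))
    (hT : ∀ k, 1 ≤ k → ‖T k‖ ≤ K * ‖B k - H k‖) (hA : ∀ k, 1 ≤ k → ‖A k‖ ≤ ‖B k - H k‖)
    (hB : ∀ k, 1 ≤ k → k ≤ r → ‖B k‖ ≤ δ) :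
    ∀ k, 1 ≤ k → k ≤ r → ‖B k - H k‖ ≤ 2 * δ := by
  intro k
  induction k using Nat.strong_induction_on with
  | _ k ih =>
  intro hk hkr
  have hδ0 : 0 ≤ δ := (norm_nonneg _).trans (hB k hk hkr)
  have hterm : ∀ l ∈ Ico 1 k, ‖T l * A (k - l) - B (k - l) * T l‖ ≤ 6 * K * δ ^ 2 := by
    intro l hl
    obtain ⟨hl, hlk⟩ := mem_Ico.1 hl
    have hTl : ‖T l‖ ≤ K * (2 * δ) := (hT l hl).trans (by gcongr; exact ih l hlk hl (by omega))
    have hAkl : ‖A (k - l)‖ ≤ 2 * δ :=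
      (hA _ (by omega)).trans (ih _ (by omega) (by omega) (by omega))
    have hBkl : ‖B (k - l)‖ ≤ δ := hB _ (by omega) (by omega)
    calc ‖T l * A (k - l) - B (k - l) * T l‖ ≤ ‖T l‖ * ‖A (k - l)‖ + ‖B (k - l)‖ * ‖T l‖ :=
          (norm_sub_le _ _).trans (add_le_add (norm_mul_le _ _) (norm_mul_le _ _))
      _ ≤ K * (2 * δ) * (2 * δ) + δ * (K * (2 * δ)) := by gcongr
      _ = 6 * K * δ ^ 2 := by ring
  have hHk : ‖H k‖ ≤ δ := calc
    ‖H k‖ ≤ ∑ l ∈ Ico 1 k, ‖T l * A (k - l) - B (k - l) * T l‖ := hH k hk hkr ▸ norm_sum_le _ _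
    _ ≤ (k - 1 : ℕ) * (6 * K * δ ^ 2) := by simpa using sum_le_sum hterm
    _ ≤ r * (6 * K * δ ^ 2) := by gcongr; omega
    _ = (6 * r * K * δ) * δ := by ring
    _ ≤ δ := mul_le_of_le_one_left hδ0 hδ
  calc ‖B k - H k‖ ≤ ‖B k‖ + ‖H k‖ := norm_sub_le _ _
    _ ≤ 2 * δ := by linarith [hB k hk hkr]

end SplittingRecursion

theorem small_coefficients_give_small_formal_exponents_general
    (p r : ℕ) (hr : 1 ≤ r)
    (ρ : ℝ) (hρ : 0 < ρ) (ε : ℝ) (hε : 0 < ε) :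
    ∃ δ : ℝ, 0 < δ ∧
      ∀ (α : Fin p → ℂ), Function.Injective α →
        (∀ i j : Fin p, i ≠ j → ρ ≤ ‖α i - α j‖) →
        ∀ (B T H A : ℕ → Matrix (Fin p) (Fin p) ℂ),
          B 0 = Matrix.diagonal α →
          T 0 = 1 → H 0 = 0 → A 0 = B 0 →
          (∀ k, 1 ≤ k → H k =
            (∑ l ∈ Finset.Ico 1 k, (T l * A (k - l) - B (k - l) * T l)) +
              (if r < k then ((k - r : ℕ) : ℂ) • T (k - r) else 0)) →
          (∀ k, 1 ≤ k → A k = Matrix.diagonal fun j => (B k - H k) j j) →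
          (∀ k, 1 ≤ k → ∀ i j : Fin p,
            T k i j = if i = j then 0 else (B k - H k) i j / (α j - α i)) →
          (∀ k, 1 ≤ k → k ≤ r → ‖B k‖ < δ) →
          ∀ j : Fin p, ‖(B r - H r) j j‖ < ε := by
  set K : ℝ := p / ρ
  set δ : ℝ := min (ε / 4) (1 / (6 * r * K + 1))
  refine ⟨δ, by positivity, ?_⟩
  intro α _ hgap B T H A _ _ _ _ hH hA hT hB j
  have hδ : 6 * r * K * δ ≤ 1 := calc
    6 * r * K * δ ≤ 6 * r * K * (1 / (6 * r * K + 1)) := by gcongr; exact min_le_right _ _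
    _ ≤ 1 := by rw [mul_one_div, div_le_one (by positivity)]; linarith
  let _ : NormedRing (Matrix (Fin p) (Fin p) ℂ) := Matrix.linftyOpNormedRing
  have hBH := norm_sub_le_two_mul_of_splitting (by positivity) hδ
    (fun k hk hkr => by rw [hH k hk, if_neg hkr.not_gt, add_zero])
    (fun k hk => by simpa using Matrix.linfty_opNorm_offDiag_div_le hρ hgap (hT k hk))
    (fun k hk => hA k hk ▸ Matrix.linfty_opNorm_diagonal_diag_le _)
    (fun k hk hkr => (hB k hk hkr).le) r hr le_rfl
  calc ‖(B r - H r) j j‖ ≤ ‖B r - H r‖ := Matrix.norm_entry_le_linfty_opNorm _ j j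
    _ ≤ 2 * δ := hBH
    _ < ε := by linarith [min_le_left (ε / 4) (1 / (6 * r * K + 1))]

/-- Theorem 5, quantified via the spectral gap: for every `p ≥ 1`, `r ≥ 1`,
`ρ > 0`, `ε > 0` there is a `δ > 0` such that any local system with leading diagonal term
`diagonal α` of spectral gap `≥ ρ` and `‖B k‖ < δ` for `1 ≤ k ≤ r` has all its formal
exponents of modulus `< ε`. -/
theorem small_coefficients_give_small_formal_exponents
    (p r : ℕ) (hp : 1 ≤ p) (hr : 1 ≤ r)
    (ρ : ℝ) (hρ : 0 < ρ) (ε : ℝ) (hε : 0 < ε) :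
    ∃ δ : ℝ, 0 < δ ∧
      ∀ (α : Fin p → ℂ), Function.Injective α →
        (∀ i j : Fin p, i ≠ j → ρ ≤ ‖α i - α j‖) →
        ∀ (B T H A : ℕ → Matrix (Fin p) (Fin p) ℂ),
          B 0 = Matrix.diagonal α →
          T 0 = 1 → H 0 = 0 → A 0 = B 0 →
          (∀ k, 1 ≤ k → H k =
            (∑ l ∈ Finset.Ico 1 k, (T l * A (k - l) - B (k - l) * T l)) +
              (if r < k then ((k - r : ℕ) : ℂ) • T (k - r) else 0)) →
          (∀ k, 1 ≤ k → A k = Matrix.diagonal fun j => (B k - H k) j j) →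
          (∀ k, 1 ≤ k → ∀ i j : Fin p,
            T k i j = if i = j then 0 else (B k - H k) i j / (α j - α i)) →
          (∀ k, 1 ≤ k → k ≤ r → ‖B k‖ < δ) →
          ∀ j : Fin p, ‖(B r - H r) j j‖ < ε :=
  small_coefficients_give_small_formal_exponents_general p r hr ρ hρ ε hε
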